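/- Let b ≥ 2 be an integer and λ ∈ (1/b, 1] a real number. Set l = ⌈b/λ⌉ and define r_i = (1 − 1/(λl))^{l−i} · (1/(λl)) / (1 − (1 − 1/(λl))^l) for 1 ≤ i ≤ l. Then for every integer x with 1 ≤ x < l, ∑_{i=1}^{x} (b + i − 1)·r_i + x·∑_{i=x+1}^{l} r_i ≤ x/(1 − e^{−1/λ}). -/

import Mathlib

open Finset Real

/-!
With `p = 1/(λl)` and geometric weights `wᵢ = (1-p)^(l-i) p`, the distribution is `r = w / Z` where
`Z = 1 - (1-p)^l`. If the buy price were exactly `1/p = λl ≥ b`, the cost of `w` would telescope to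
exactly `x`: each extra ski day adds `1` to it. Lowering the price to `b` only decreases the cost, and
`(1-p)^l ≤ e^(-pl) = e^(-1/λ)` gives `Z ≥ 1 - e^(-1/λ)`.
-/

/-- Expected cost when the season lasts `x` days, buying costs `c`, and `w i` is the weight of
buying on day `i ∈ [1, l]`. -/
noncomputable def skiRentalCost (c : ℝ) (w : ℤ → ℝ) (l x : ℤ) : ℝ :=
  ∑ i ∈ Icc 1 x, (c + i - 1) * w i + x * ∑ i ∈ Icc (x + 1) l, w i

section skiRentalCost

variable {c : ℝ} {w : ℤ → ℝ} {l x : ℤ}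

lemma skiRentalCost_congr {w' : ℤ → ℝ} (hx : 0 ≤ x) (hxl : x ≤ l)
    (h : ∀ i ∈ Icc 1 l, w i = w' i) : skiRentalCost c w l x = skiRentalCost c w' l x := by
  have h' : ∀ {a b : ℤ}, 1 ≤ a → b ≤ l → ∀ i ∈ Icc a b, w i = w' i := fun ha hb i hi =>
    h i (Icc_subset_Icc ha hb hi)
  unfold skiRentalCost
  rw [sum_congr rfl fun i hi => congrArg _ (h' le_rfl hxl i hi),
    sum_congr rfl (h' (by omega) le_rfl)]

lemma skiRentalCost_div_const (Z : ℝ) :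
    skiRentalCost c (fun i => w i / Z) l x = skiRentalCost c w l x / Z := by
  simp only [skiRentalCost, sum_div, add_div, mul_div_assoc]

lemma skiRentalCost_mono_left {c' : ℝ} (hc : c ≤ c') (hw : ∀ i ∈ Icc 1 x, 0 ≤ w i) :
    skiRentalCost c w l x ≤ skiRentalCost c' w l x := by
  unfold skiRentalCost
  gcongr with i hi
  exact hw i hi

end skiRentalCost

section geometric

variable {p : ℝ} {l : ℤ}

lemma sum_Icc_geometric_tail (hp : p ≠ 1) {x : ℤ} (hxl : x ≤ l) :
    ∑ i ∈ Icc (x + 1) l, (1 - p) ^ (l - i) * p = 1 - (1 - p) ^ (l - x) := by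
  have hq : 1 - p ≠ 0 := sub_ne_zero.2 (Ne.symm hp)
  induction x, hxl using Int.leInductionDown with
  | base => simp
  | pred x hxl ih =>
    rw [sub_add_cancel, ← insert_Icc_add_one_left_eq_Icc (by omega),
      sum_insert (by simp), ih, show l - (x - 1) = l - x + 1 by ring, zpow_add_one₀ hq]
    ring

lemma skiRentalCost_geometric (hp₀ : p ≠ 0) (hp₁ : p ≠ 1) {x : ℤ} (hx : 0 ≤ x) (hxl : x ≤ l) :
    skiRentalCost p⁻¹ (fun i => (1 - p) ^ (l - i) * p) l x = x := by
  have hq : 1 - p ≠ 0 := sub_ne_zero.2 (Ne.symm hp₁)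
  rw [skiRentalCost, sum_Icc_geometric_tail hp₁ hxl]
  induction x, hx using Int.leInduction with
  | base => simp
  | succ x hx ih =>
    specialize ih (by omega)
    rw [show l - x = l - (x + 1) + 1 by ring, zpow_add_one₀ hq] at ih
    rw [← insert_Icc_right_eq_Icc_add_one (by omega), sum_insert (by simp)]
    push_cast
    linear_combination ih + (1 - p) ^ (l - (x + 1)) * inv_mul_cancel₀ hp₀

end geometric

lemma one_sub_div_zpow_le_exp_neg {n : ℤ} (hn : 0 ≤ n) {t : ℝ} (ht : t ≤ n) :
    (1 - t / n) ^ n ≤ exp (-t) := by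
  lift n to ℕ using hn
  exact_mod_cast one_sub_div_pow_le_exp_neg ht

theorem costRobust_case3_general (b : ℕ) (hb : 2 ≤ b) (lam : ℝ)
    (hlam₁ : 1 / (b : ℝ) < lam)
    (l : ℤ) (hl : l = ⌈(b : ℝ) / lam⌉)
    (r : ℤ → ℝ)
    (hr : ∀ i ∈ Finset.Icc 1 l,
      r i = (1 - 1 / (lam * (l : ℝ))) ^ (l - i) * (1 / (lam * (l : ℝ)))
              / (1 - (1 - 1 / (lam * (l : ℝ))) ^ l))
    (x : ℤ) (hx1 : 1 ≤ x) (hxl : x < l) :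
    ∑ i ∈ Finset.Icc 1 x, ((b : ℝ) + (i : ℝ) - 1) * r i
        + (x : ℝ) * ∑ i ∈ Finset.Icc (x + 1) l, r i
      ≤ (x : ℝ) / (1 - Real.exp (-(1 / lam))) := by
  have hb' : (2 : ℝ) ≤ b := by exact_mod_cast hb
  have hlam : 0 < lam := lt_of_le_of_lt (by positivity) hlam₁
  have hbl : (b : ℝ) ≤ lam * l := by
    rw [hl, ← div_le_iff₀' hlam]; exact Int.le_ceil _
  have hl₀ : (0 : ℝ) < l := pos_of_mul_pos_right (by linarith) hlam.le
  set p := 1 / (lam * l) with hp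
  have hp₀ : 0 < p := by positivity
  have hp₁ : p < 1 := (div_lt_one (by linarith)).2 (by linarith)
  have hbp : (b : ℝ) ≤ p⁻¹ := by rwa [hp, one_div, inv_inv]
  have hexp : (1 - p) ^ l ≤ exp (-(1 / lam)) := by
    rw [hp, ← div_div]
    refine one_sub_div_zpow_le_exp_neg (by exact_mod_cast hl₀.le) ?_
    rw [div_le_iff₀ hlam]; linarith
  have hE : 0 < 1 - exp (-(1 / lam)) := by
    simpa using exp_lt_one_iff.2 (neg_lt_zero.2 (one_div_pos.2 hlam))
  have hx : (0 : ℝ) ≤ x := by exact_mod_cast (by omega : (0 : ℤ) ≤ x)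
  change skiRentalCost b r l x ≤ _
  calc skiRentalCost b r l x
      = skiRentalCost b (fun i => (1 - p) ^ (l - i) * p) l x / (1 - (1 - p) ^ l) := by
        rw [← skiRentalCost_div_const]; exact skiRentalCost_congr (by omega) hxl.le hr
    _ ≤ skiRentalCost p⁻¹ (fun i => (1 - p) ^ (l - i) * p) l x / (1 - (1 - p) ^ l) := by
        gcongr
        · linarith
        · exact skiRentalCost_mono_left hbp fun i _ => by positivity
    _ = x / (1 - (1 - p) ^ l) := by
        rw [skiRentalCost_geometric hp₀.ne' hp₁.ne (by omega) hxl.le]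
    _ ≤ x / (1 - exp (-(1 / lam))) := div_le_div_of_nonneg_left hx hE (by linarith)

/-- Case `y < b`, `x < l` of Theorem 2: the expected cost of the CostRobust
randomized algorithm is at most `x/(1 − e^{−1/λ})`. -/
theorem costRobust_case3 (b : ℕ) (hb : 2 ≤ b) (lam : ℝ)
    (hlam₁ : 1 / (b : ℝ) < lam) (hlam₂ : lam ≤ 1)
    (l : ℤ) (hl : l = ⌈(b : ℝ) / lam⌉)
    (r : ℤ → ℝ)
    (hr : ∀ i ∈ Finset.Icc 1 l,
      r i = (1 - 1 / (lam * (l : ℝ))) ^ (l - i) * (1 / (lam * (l : ℝ)))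
              / (1 - (1 - 1 / (lam * (l : ℝ))) ^ l))
    (x : ℤ) (hx1 : 1 ≤ x) (hxl : x < l) :
    ∑ i ∈ Finset.Icc 1 x, ((b : ℝ) + (i : ℝ) - 1) * r i
        + (x : ℝ) * ∑ i ∈ Finset.Icc (x + 1) l, r i
      ≤ (x : ℝ) / (1 - Real.exp (-(1 / lam))) :=
  costRobust_case3_general b hb lam hlam₁ l hl r hr x hx1 hxl
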